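/- Let I be a weakly n-absorbing ideal of a commutative ring R that is not an n-absorbing ideal, and let M be an R-module with IM = M. Then M = {0}. -/

import Mathlib

open Finset Polynomial

/-- `I` is a weakly `n`-absorbing ideal: `I` is proper and whenever a product of `n+1`
elements is nonzero and lies in `I`, some product of `n` of them lies in `I`. -/
def WeaklyAbsorbing {R : Type*} [CommRing R] (n : ℕ) (I : Ideal R) : Prop :=
  I ≠ ⊤ ∧ ∀ a : Fin (n + 1) → R, (∏ i, a i) ≠ 0 → (∏ i, a i) ∈ I →
    ∃ j : Fin (n + 1), (∏ i ∈ univ.erase j, a i) ∈ I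

/-- `I` is an `n`-absorbing ideal. -/
def Absorbing {R : Type*} [CommRing R] (n : ℕ) (I : Ideal R) : Prop :=
  I ≠ ⊤ ∧ ∀ a : Fin (n + 1) → R, (∏ i, a i) ∈ I →
    ∃ j : Fin (n + 1), (∏ i ∈ univ.erase j, a i) ∈ I

/-- `I` is a strongly weakly `n`-absorbing ideal. -/
def StronglyWeaklyAbsorbing {R : Type*} [CommRing R] (n : ℕ) (I : Ideal R) : Prop :=
  I ≠ ⊤ ∧ ∀ J : Fin (n + 1) → Ideal R, (∏ i, J i) ≠ ⊥ → (∏ i, J i) ≤ I →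
    ∃ j : Fin (n + 1), (∏ i ∈ univ.erase j, J i) ≤ I

/-- `I` is a weakly primary ideal. -/
def WeaklyPrimary {R : Type*} [CommRing R] (I : Ideal R) : Prop :=
  I ≠ ⊤ ∧ ∀ a b : R, a * b ≠ 0 → a * b ∈ I → a ∈ I ∨ b ∈ I.radical

/-! A witness `a` of non-absorption has `∏ aᵢ ∈ I` but no product of `n` of the `aᵢ` in `I`;
weak absorption then forces `∏ aᵢ = 0`. By strong induction on `S`, the product stays zero when
the `aᵢ` with `i ∈ S` are replaced by elements `xᵢ ∈ I`: the tuple `aᵢ + xᵢ` (for `i ∈ S`) agrees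
with `a` modulo `I`, so none of its `n`-fold products lies in `I`, while its full product lies in
`I` and expands to the replaced product plus terms that vanish by induction, hence must be `0`.
With `S` everything this gives `I ^ (n + 1) = 0`, and then `M = I ^ (n + 1) M = 0`. -/

theorem Ideal.pow_le_of_forall_prod_mem {R : Type*} [CommSemiring R] {I J : Ideal R} {m : ℕ}
    (h : ∀ x : Fin m → R, (∀ i, x i ∈ I) → ∏ i, x i ∈ J) : I ^ m ≤ J := by
  rw [Submodule.pow_eq_span_pow_set, Submodule.span_le]
  rintro _ hy
  obtain ⟨x, rfl⟩ := Set.mem_pow.mp hy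
  simpa [List.prod_ofFn] using h (fun i ↦ x i) (fun i ↦ (x i).2)

theorem Submodule.pow_smul_eq_self {R M : Type*} [CommSemiring R] [AddCommMonoid M] [Module R M]
    {I : Ideal R} {N : Submodule R M} (h : I • N = N) (k : ℕ) : I ^ k • N = N := by
  induction k with
  | zero => simp
  | succ k ih => rw [pow_succ', ← Ideal.smul_eq_mul, Submodule.smul_assoc, ih, h]

theorem Submodule.eq_bot_of_smul_eq_self_of_pow_eq_bot {R M : Type*} [CommSemiring R]
    [AddCommMonoid M] [Module R M] {I : Ideal R} {N : Submodule R M} {k : ℕ} (hN : I • N = N)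
    (hI : I ^ k = ⊥) : N = ⊥ := by
  rw [← pow_smul_eq_self hN k, hI, Submodule.bot_smul]

theorem Ideal.prod_mem_iff_of_sub_mem {R ι : Type*} [CommRing R] {I : Ideal R} {a b : ι → R}
    (h : ∀ i, b i - a i ∈ I) (s : Finset ι) : ∏ i ∈ s, b i ∈ I ↔ ∏ i ∈ s, a i ∈ I := by
  have : ∀ i, Ideal.Quotient.mk I (b i) = Ideal.Quotient.mk I (a i) :=
    fun i ↦ Ideal.Quotient.eq.mpr (h i)
  simp only [← Ideal.Quotient.eq_zero_iff_mem, map_prod, this]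

namespace WeaklyAbsorbing

variable {R : Type*} [CommRing R] {n : ℕ} {I : Ideal R}

theorem exists_prod_eq_zero_of_not_absorbing (hI : WeaklyAbsorbing n I) (hna : ¬ Absorbing n I) :
    ∃ a : Fin (n + 1) → R, ∏ i, a i = 0 ∧ ∀ j, ∏ i ∈ univ.erase j, a i ∉ I := by
  by_contra! h
  refine hna ⟨hI.1, fun a ha ↦ ?_⟩
  by_cases ha0 : ∏ i, a i = 0
  exacts [h a ha0, hI.2 a ha0 ha]

theorem prod_mul_prod_compl_eq_zero (hI : WeaklyAbsorbing n I) {a : Fin (n + 1) → R}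
    (ha : ∏ i, a i = 0) (hmiss : ∀ j, ∏ i ∈ univ.erase j, a i ∉ I) {x : Fin (n + 1) → R}
    (hx : ∀ i, x i ∈ I) (S : Finset (Fin (n + 1))) : (∏ i ∈ S, x i) * ∏ i ∈ Sᶜ, a i = 0 := by
  induction S using Finset.strongInduction with
  | H S ih =>
  by_contra hne
  set y : Fin (n + 1) → R := fun i ↦ if i ∈ S then x i else 0
  have hexpand : ∏ i, (y i + a i) = (∏ i ∈ S, x i) * ∏ i ∈ Sᶜ, a i := by
    rw [Fintype.prod_add, Finset.sum_eq_single S]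
    · rw [prod_congr rfl fun i hi ↦ if_pos hi]
    · intro T _ hTS
      by_cases hT : T ⊆ S
      · rw [prod_congr rfl fun i hi ↦ if_pos (hT hi)]
        exact ih T (ssubset_of_subset_of_ne hT hTS)
      · obtain ⟨i, hiT, hiS⟩ := not_subset.mp hT
        rw [prod_eq_zero hiT (if_neg hiS), zero_mul]
    · simp
  obtain ⟨s, hs⟩ : S.Nonempty := by
    rw [nonempty_iff_ne_empty]
    rintro rfl
    simp [ha] at hne
  obtain ⟨j, hj⟩ := hI.2 _ (hexpand ▸ hne) (hexpand ▸ I.mul_mem_right _ (I.prod_mem hs (hx s)))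
  refine hmiss j ((Ideal.prod_mem_iff_of_sub_mem (fun i ↦ ?_) _).mp hj)
  simp only [y, add_sub_cancel_right]
  split_ifs
  exacts [hx i, I.zero_mem]

theorem pow_succ_eq_bot_of_not_absorbing (hI : WeaklyAbsorbing n I) (hna : ¬ Absorbing n I) :
    I ^ (n + 1) = ⊥ := by
  obtain ⟨a, ha, hmiss⟩ := hI.exists_prod_eq_zero_of_not_absorbing hna
  refine eq_bot_iff.mpr <| Ideal.pow_le_of_forall_prod_mem fun x hx ↦ ?_
  simpa using hI.prod_mul_prod_compl_eq_zero ha hmiss hx univ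

end WeaklyAbsorbing

theorem stmt14_general {R : Type*} [CommRing R] (n : ℕ) (I : Ideal R)
    (hI : WeaklyAbsorbing n I) (hna : ¬ Absorbing n I)
    (M : Type*) [AddCommGroup M] [Module R M]
    (hIM : I • (⊤ : Submodule R M) = ⊤) :
    ∀ x : M, x = 0 :=
  have hM : (⊤ : Submodule R M) = ⊥ :=
    Submodule.eq_bot_of_smul_eq_self_of_pow_eq_bot hIM (hI.pow_succ_eq_bot_of_not_absorbing hna)
  fun x ↦ (Submodule.eq_bot_iff ⊤).mp hM x trivial

theorem stmt14 {R : Type*} [CommRing R] (n : ℕ) (hn : 0 < n) (I : Ideal R)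
    (hI : WeaklyAbsorbing n I) (hna : ¬ Absorbing n I)
    (M : Type*) [AddCommGroup M] [Module R M]
    (hIM : I • (⊤ : Submodule R M) = ⊤) :
    ∀ x : M, x = 0 :=
  stmt14_general n I hI hna M hIM
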